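/- arXiv:1205.4354 — 4 statements merged into one kernel-verified Lean document; each statement's English description precedes it below -/
import Mathlib

section
/- Let A be a Banach algebra and let J ⊆ A be a left ideal of A that is dense in A for the norm topology. Then J (as an algebra) is directly finite if and only if A is directly finite. -/
/-!
Negation turns `a ∘ b = a + b - a * b` into the operation `x * y = y + x + x * y` of the monoid
`PreQuasiregular A`, so direct finiteness is a statement about one-sided inverses there.
Given `a ∘ b = 0` in `A`, density gives `j ∈ J` with `‖b - j‖ < 1`, so `j - b` is quasiregular
(Banach's fixed point theorem). Conjugating by it moves the second factor into `J`; a left inverse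
of an element of a left ideal lies in it too, so the conjugated factors commute in `J`, and
conjugating back gives `b ∘ a = 0`.
-/

open PreQuasiregular NNReal

theorem mul_eq_one_comm_of_inv_mul_mem {M : Type*} [Monoid M] {S : Set M}
    (hfin : ∀ x ∈ S, ∀ y ∈ S, x * y = 1 → y * x = 1)
    (hleft : ∀ x, ∀ t ∈ S, x * t = 1 → x ∈ S)
    (w : Mˣ) {u v : M} (hv : ↑w⁻¹ * v ∈ S) (huv : u * v = 1) : v * u = 1 := by
  have hst : u * w * (↑w⁻¹ * v) = 1 := by rw [mul_assoc, Units.mul_inv_cancel_left, huv]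
  have hts := hfin _ (hleft _ _ hv hst) _ hv hst
  calc v * u = w * (↑w⁻¹ * v * (u * w)) * ↑w⁻¹ := by simp [mul_assoc]
    _ = 1 := by rw [hts, mul_one, Units.mul_inv]

namespace PreQuasiregular

variable {R : Type*} [NonUnitalRing R]

theorem equiv_neg_mul_equiv_neg_eq_one_iff (a b : R) :
    equiv (-a) * equiv (-b) = 1 ↔ a + b - a * b = 0 := by
  rw [← equiv.symm.injective.eq_iff]
  simp only [equiv_symm_apply, val_mul, equiv_apply_val, val_one, neg_mul_neg]
  rw [← neg_eq_zero]
  constructor <;> intro h <;> rw [← h] <;> abel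

theorem val_mem_of_mul_eq_one (J : AddSubgroup R) (hideal : ∀ a, ∀ j ∈ J, a * j ∈ J)
    {x t : PreQuasiregular R} (ht : t.val ∈ J) (h : x * t = 1) : x.val ∈ J := by
  have hval : t.val + x.val + x.val * t.val = 0 := by simpa using congrArg val h
  rw [show x.val = -t.val - x.val * t.val by rw [← sub_eq_zero, ← hval]; abel]
  exact J.sub_mem (J.neg_mem ht) (hideal _ _ ht)

theorem val_units_inv_mul_equiv_add (w : (PreQuasiregular R)ˣ) (j : R) :
    (↑w⁻¹ * equiv (w.val.val + j)).val = j + w⁻¹.val.val * j := by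
  have := add_inv_add_mul_eq_zero w
  simp only [val_mul, equiv_apply_val]
  rw [← sub_eq_zero, ← this]
  noncomm_ring

end PreQuasiregular

theorem add_sub_mul_eq_zero_comm_of_isQuasiregular_sub {R : Type*} [NonUnitalRing R]
    (J : AddSubgroup R) (hideal : ∀ a, ∀ j ∈ J, a * j ∈ J)
    (hJ : ∀ a ∈ J, ∀ b ∈ J, a + b - a * b = 0 → b + a - b * a = 0)
    {a b j : R} (hj : j ∈ J) (hbj : IsQuasiregular (j - b)) (hab : a + b - a * b = 0) :
    b + a - b * a = 0 := by
  obtain ⟨w, hw⟩ := hbj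
  rw [← equiv_neg_mul_equiv_neg_eq_one_iff] at hab ⊢
  refine mul_eq_one_comm_of_inv_mul_mem (S := {x : PreQuasiregular R | x.val ∈ J}) ?_
    (fun x t ht h => val_mem_of_mul_eq_one J hideal ht h) w ?_ hab
  · rintro ⟨x⟩ hx ⟨y⟩ hy hxy
    have := hJ _ (J.neg_mem hx) _ (J.neg_mem hy)
    simp only [← equiv_neg_mul_equiv_neg_eq_one_iff, neg_neg] at this
    exact this hxy
  · have hb : -b = w.val.val + -j := by rw [equiv_symm_apply] at hw; rw [hw]; abel
    simp only [Set.mem_ofPred_eq, hb, val_units_inv_mul_equiv_add]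
    exact J.add_mem (J.neg_mem hj) (hideal _ _ (J.neg_mem hj))

theorem exists_add_add_eq_zero_of_norm_le {E : Type*} [NormedAddCommGroup E] [CompleteSpace E]
    (L : E →+ E) {k : ℝ≥0} (hk : k < 1) (hL : ∀ y, ‖L y‖ ≤ k * ‖y‖) (x : E) :
    ∃ y, y + x + L y = 0 := by
  let f : E → E := fun y => -(x + L y)
  have hf : ContractingWith k f := by
    refine ⟨hk, LipschitzWith.of_dist_le_mul fun y z => ?_⟩
    have hfyz : f y - f z = L (z - y) := by simp only [f, map_sub]; abel
    rw [dist_eq_norm, hfyz, dist_comm, dist_eq_norm]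
    exact hL _
  refine ⟨ContractingWith.fixedPoint f hf, ?_⟩
  have hfix : f _ = _ := hf.fixedPoint_isFixedPt
  rw [add_assoc, add_eq_zero_iff_eq_neg]
  exact hfix.symm

theorem isQuasiregular_of_norm_lt_one {R : Type*} [NonUnitalNormedRing R] [CompleteSpace R]
    {x : R} (hx : ‖x‖ < 1) : IsQuasiregular x := by
  obtain ⟨y, hy⟩ := exists_add_add_eq_zero_of_norm_le (AddMonoidHom.mulLeft x) (k := ‖x‖₊) hx
    (norm_mul_le x) x
  obtain ⟨z, hz⟩ := exists_add_add_eq_zero_of_norm_le (AddMonoidHom.mulRight x) (k := ‖x‖₊) hx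
    (fun y => (norm_mul_le y x).trans_eq (mul_comm _ _)) x
  rw [isQuasiregular_iff', isUnit_iff_exists_and_exists]
  have hz' : x + z + z * x = 0 := by rw [add_comm x z]; exact hz
  exact ⟨⟨equiv y, equiv.symm.injective hy⟩, ⟨equiv z, equiv.symm.injective hz'⟩⟩

theorem directlyFinite_of_dense_left_ideal_general
    {A : Type*} [NonUnitalNormedRing A] [NormedSpace ℂ A] [CompleteSpace A]
    (J : Submodule ℂ A)
    (hideal : ∀ a : A, ∀ j ∈ J, a * j ∈ J)
    (hdense : Dense (J : Set A)) :
    (∀ a ∈ J, ∀ b ∈ J, a + b - a * b = 0 → b + a - b * a = 0) ↔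
      (∀ a b : A, a + b - a * b = 0 → b + a - b * a = 0) := by
  refine ⟨fun hJ a b hab => ?_, fun hA a _ b _ => hA a b⟩
  obtain ⟨j, hj, hbj⟩ := Metric.mem_closure_iff.mp (hdense b) 1 one_pos
  have hc : IsQuasiregular (j - b) :=
    isQuasiregular_of_norm_lt_one (by rwa [norm_sub_rev, ← dist_eq_norm])
  exact add_sub_mul_eq_zero_comm_of_isQuasiregular_sub J.toAddSubgroup hideal hJ hj hc hab

/-- Let `A` be a (complex) Banach algebra and `J ⊆ A` a dense left
ideal. Then `J` is directly finite (for the quasi-product `a ∘ b = a + b - a * b`)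
if and only if `A` is. -/
theorem directlyFinite_of_dense_left_ideal
    {A : Type*} [NonUnitalNormedRing A] [NormedSpace ℂ A]
    [IsScalarTower ℂ A A] [SMulCommClass ℂ A A] [CompleteSpace A]
    (J : Submodule ℂ A)
    (hideal : ∀ a : A, ∀ j ∈ J, a * j ∈ J)
    (hmul : ∀ i ∈ J, ∀ j ∈ J, i * j ∈ J)
    (hdense : Dense (J : Set A)) :
    (∀ a ∈ J, ∀ b ∈ J, a + b - a * b = 0 → b + a - b * a = 0) ↔
      (∀ a b : A, a + b - a * b = 0 → b + a - b * a = 0) :=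
  directlyFinite_of_dense_left_ideal_general J hideal hdense
end

section
/- Let A be a C*-algebra and let τ : A₊ → [0, ∞] be a faithful tracial weight: τ is additive and ℝ₊-homogeneous on the positive cone A₊, τ(x) > 0 for every nonzero x ∈ A₊, and τ(x*x) = τ(xx*) for all x ∈ A. Let B be the norm closure in A of the linear span of {x ∈ A₊ : τ(x) < ∞}. Then B is directly finite: whenever a, b ∈ B satisfy a + b − ab = 0, it follows that b + a − ba = 0. -/
/-!
Extend `τ` from the cone `{x | 0 ≤ x ∧ τ x < ⊤}` to a linear functional `σ` on its span `𝔪`; this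
is possible because a vanishing combination of cone elements splits, through real and imaginary
parts and then positive and negative coefficients, into two equal nonnegative combinations, on
which `τ` is additive. By polarization, `star x * y ∈ 𝔪` and `σ (star x * y) = σ (y * star x)` whenever
`τ (star x * x)` and `τ (star y * y)` are finite, so `𝔪` is an ideal on which `σ` is a trace.

If `a + b - a * b = 0` with `b ∈ 𝔪`, then `q = b + a - b * a = a * b - b * a` is an idempotent of
`𝔪` with `σ q = 0`. Kaplansky's formula turns `q` into a projection `p = q * p` with `p * q = q`,
so `p ∈ 𝔪` and `τ p = σ p = σ q = 0`; faithfulness gives `p = 0`, hence `q = 0`. For `b` in the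
closure of `𝔪` choose `m ∈ 𝔪` with `‖b - m‖ < 1`: then `g = 1 - (b - m)` is invertible in the
unitization and `g⁻¹ * (1 - b) = 1 - b'` with `b' ∈ 𝔪`, which reduces to the previous case.
-/

open scoped ENNReal CStarAlgebra

theorem LinearMap.exists_comp_eq_of_ker_le {K V₁ V₂ V₃ : Type*} [Field K]
    [AddCommGroup V₁] [Module K V₁] [AddCommGroup V₂] [Module K V₂]
    [AddCommGroup V₃] [Module K V₃] (f : V₁ →ₗ[K] V₂) (h : V₁ →ₗ[K] V₃)
    (hker : LinearMap.ker f ≤ LinearMap.ker h) : ∃ g : V₂ →ₗ[K] V₃, g ∘ₗ f = h := by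
  obtain ⟨g, hg⟩ := LinearMap.exists_extend ((LinearMap.ker f).liftQ h hker ∘ₗ
    f.quotKerEquivRange.symm.toLinearMap)
  refine ⟨g, LinearMap.ext fun x => ?_⟩
  have := congr($hg ⟨f x, LinearMap.mem_range_self f x⟩)
  simpa [LinearMap.quotKerEquivRange_symm_apply_image] using this

section RealPart

variable {A : Type*} [AddCommGroup A] [Module ℂ A] [StarAddMonoid A] [StarModule ℂ A]
  {ι : Type*} (s : Finset ι) (c : ι → ℂ) {v : ι → A} (hv : ∀ i ∈ s, IsSelfAdjoint (v i))
include hv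

lemma realPart_sum_smul : (realPart (∑ i ∈ s, c i • v i) : A) = ∑ i ∈ s, (c i).re • v i := by
  simp only [map_sum, realPart_smul, AddSubgroup.val_finsetSum]
  refine Finset.sum_congr rfl fun i hi => ?_
  simp [(hv i hi).coe_realPart, (hv i hi).imaginaryPart]

lemma imaginaryPart_sum_smul :
    (imaginaryPart (∑ i ∈ s, c i • v i) : A) = ∑ i ∈ s, (c i).im • v i := by
  simp only [map_sum, imaginaryPart_smul, AddSubgroup.val_finsetSum]
  refine Finset.sum_congr rfl fun i hi => ?_
  simp [(hv i hi).coe_realPart, (hv i hi).imaginaryPart]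

end RealPart

section Polarization

open Complex

variable {A : Type*} [NonUnitalRing A] [StarRing A] [Module ℂ A] [StarModule ℂ A]
  [IsScalarTower ℂ A A] [SMulCommClass ℂ A A]

lemma star_mul_eq_polarization (x y : A) :
    star x * y = (4 : ℂ)⁻¹ • ∑ k ∈ Finset.range 4,
      I ^ k • (star (I ^ k • x + y) * (I ^ k • x + y)) := by
  simp only [Finset.sum_range_succ, Finset.sum_range_zero, star_add, star_smul, add_mul, mul_add,
    smul_mul_assoc, mul_smul_comm, smul_smul, smul_add, star_pow, Complex.star_def,
    Complex.conj_I, zero_add]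
  match_scalars <;> ring_nf <;> simp [I_sq, I_pow_four]; norm_num

lemma mul_star_eq_polarization (x y : A) :
    y * star x = (4 : ℂ)⁻¹ • ∑ k ∈ Finset.range 4,
      I ^ k • ((I ^ k • x + y) * star (I ^ k • x + y)) := by
  simp only [Finset.sum_range_succ, Finset.sum_range_zero, star_add, star_smul, add_mul, mul_add,
    smul_mul_assoc, mul_smul_comm, smul_smul, smul_add, star_pow, Complex.star_def,
    Complex.conj_I, zero_add]
  match_scalars <;> ring_nf <;> simp [I_sq, I_pow_four]; norm_num

end Polarization

lemma mul_eq_one_comm_of_inv_mul_mem_s8 {M : Type*} [Monoid M] {N : Set M}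
    (hN : ∀ x, ∀ y ∈ N, x * y = 1 → y * x = 1) (g : Mˣ) {x y : M} (hy : ↑g⁻¹ * y ∈ N)
    (h : x * y = 1) : y * x = 1 := by
  have := hN (x * g) _ hy (by rw [mul_assoc, g.mul_inv_cancel_left, h])
  calc y * x = g * (↑g⁻¹ * y * (x * g)) * ↑g⁻¹ := by
        simp only [mul_assoc, Units.mul_inv_cancel_left, Units.mul_inv, mul_one]
    _ = 1 := by rw [this, mul_one, Units.mul_inv]

lemma Unitization.one_sub_inr_mul_one_sub_inr {R A : Type*} [CommRing R] [NonUnitalRing A]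
    [Module R A] (a b : A) :
    (1 - (a : Unitization R A)) * (1 - b) = 1 - ((a + b - a * b : A) : Unitization R A) := by
  rw [Unitization.inr_sub, Unitization.inr_add, Unitization.inr_mul]
  noncomm_ring

lemma Unitization.one_sub_inr_mul_one_sub_inr_eq_one_iff {R A : Type*} [CommRing R]
    [NonUnitalRing A] [Module R A] {a b : A} :
    (1 - (a : Unitization R A)) * (1 - b) = 1 ↔ a + b - a * b = 0 := by
  rw [Unitization.one_sub_inr_mul_one_sub_inr, sub_eq_self,
    (Unitization.inr_injective (R := R)).eq_iff' (Unitization.inr_zero R)]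

lemma Unitization.mul_inr {R A : Type*} [CommRing R] [NonUnitalRing A] [Module R A]
    (x : Unitization R A) (a : A) : x * a = ((x.fst • a + x.snd * a : A) : Unitization R A) := by
  ext <;> simp

theorem exists_isStarProjection_of_isIdempotentElem {R : Type*} [Ring R] [StarRing R]
    {e : R} (he : IsIdempotentElem e) (hu : IsUnit (1 + star (e - star e) * (e - star e))) :
    ∃ p : R, IsStarProjection p ∧ e * p = p ∧ p * e = e := by
  -- Kaplansky's formula: `z` commutes with `e` and `star e`, and `e * star e * z⁻¹` works.
  obtain ⟨z, hz⟩ := hu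
  have hee : e * e = e := he.eq
  have hee' : star e * star e = star e := he.star.eq
  have hz' : (z : R) = 1 - e - star e + star e * e + e * star e := by
    simp only [hz, star_sub, star_star, sub_mul, mul_sub, hee, hee']; abel
  have hze : (z : R) * e = e * star e * e := by
    simp only [hz', add_mul, sub_mul, one_mul, mul_assoc, hee]; abel
  have hez : e * (z : R) = e * star e * e := by
    simp only [hz', mul_add, mul_sub, mul_one, ← mul_assoc, hee]; abel
  have hzs : star (z : R) = z := by
    rw [hz, star_add, star_one, star_mul, star_star]
  have hc : Commute (z : R) e := hze.trans hez.symm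
  have hc' : Commute (z : R) (star e) := by
    simpa [Commute, SemiconjBy, hzs] using congrArg star hc.eq.symm
  have hzi : star (↑z⁻¹ : R) = ↑z⁻¹ := by
    refine (Units.inv_eq_of_mul_eq_one_left ?_).symm
    rw [← hzs, ← star_mul, Units.mul_inv, star_one]
  have hpe : e * star e * ↑z⁻¹ * e = e := calc
    _ = e * star e * e * ↑z⁻¹ := by rw [mul_assoc _ (↑z⁻¹ : R), hc.units_inv_left.eq, ← mul_assoc]
    _ = e := by rw [← hez, mul_assoc, Units.mul_inv, mul_one]
  refine ⟨e * star e * ↑z⁻¹, ⟨?_, ?_⟩, ?_, hpe⟩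
  · rw [IsIdempotentElem, ← mul_assoc, ← mul_assoc, hpe]
  · rw [IsSelfAdjoint, star_mul, hzi, star_mul, star_star]
    exact (hc.mul_right hc').units_inv_left.eq
  · rw [← mul_assoc, ← mul_assoc, hee]

lemma IsIdempotentElem.exists_isStarProjection {A : Type*} [NonUnitalCStarAlgebra A]
    [PartialOrder A] [StarOrderedRing A] {e : A} (he : IsIdempotentElem e) :
    ∃ p : A, IsStarProjection p ∧ e * p = p ∧ p * e = e := by
  have he' : IsIdempotentElem (e : A⁺¹) := by
    rw [IsIdempotentElem, ← Unitization.inr_mul, he.eq]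
  obtain ⟨p, hp, hep, hpe⟩ := exists_isStarProjection_of_isIdempotentElem he'
    (isStrictlyPositive_one.add_nonneg (star_mul_self_nonneg _)).isUnit
  have hp_fst : p.fst = 0 := by simpa using congrArg (·.fst) hep.symm
  have hp_eq : p = (p.snd : A⁺¹) := Unitization.ext (by simp [hp_fst]) rfl
  rw [hp_eq] at hp hep hpe
  exact ⟨p.snd, Unitization.isStarProjection_inr_iff.mp hp,
    Unitization.inr_injective (R := ℂ) (by simpa using hep),
    Unitization.inr_injective (R := ℂ) (by simpa using hpe)⟩

section Weight

variable {A : Type*} [AddCommGroup A] [PartialOrder A] [Module ℝ A]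

structure IsWeight (τ : A → ℝ≥0∞) : Prop where
  map_add : ∀ x y : A, 0 ≤ x → 0 ≤ y → τ (x + y) = τ x + τ y
  map_smul : ∀ (t : ℝ) (x : A), 0 ≤ t → 0 ≤ x → τ (t • x) = ENNReal.ofReal t * τ x

def finiteCone (τ : A → ℝ≥0∞) : Set A := {x | 0 ≤ x ∧ τ x < ⊤}

namespace IsWeight

variable {τ : A → ℝ≥0∞} (hτ : IsWeight τ)
include hτ

lemma map_zero : τ 0 = 0 := by simpa using hτ.map_smul 0 0 le_rfl le_rfl

variable [IsOrderedAddMonoid A]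

lemma mono {x y : A} (hx : 0 ≤ x) (hxy : x ≤ y) : τ x ≤ τ y := by
  have := hτ.map_add x (y - x) hx (sub_nonneg.mpr hxy)
  rw [add_sub_cancel] at this
  exact this ▸ le_self_add

lemma lt_top_of_le {x y : A} (hx : 0 ≤ x) (hxy : x ≤ y) (hy : τ y < ⊤) : τ x < ⊤ :=
  (hτ.mono hx hxy).trans_lt hy

variable [PosSMulMono ℝ A]

lemma map_sum_smul {ι : Type*} (s : Finset ι) (c : ι → ℝ) (v : ι → A)
    (hc : ∀ i ∈ s, 0 ≤ c i) (hv : ∀ i ∈ s, 0 ≤ v i) :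
    τ (∑ i ∈ s, c i • v i) = ∑ i ∈ s, ENNReal.ofReal (c i) * τ (v i) := by
  classical
  induction s using Finset.induction_on with
  | empty => simpa using hτ.map_zero
  | insert i s hi ih =>
    simp only [Finset.mem_insert, forall_eq_or_imp] at hc hv
    have hsum : 0 ≤ ∑ j ∈ s, c j • v j :=
      Finset.sum_nonneg fun j hj => smul_nonneg (hc.2 j hj) (hv.2 j hj)
    rw [Finset.sum_insert hi, Finset.sum_insert hi, hτ.map_add _ _ (smul_nonneg hc.1 hv.1) hsum,
      hτ.map_smul _ _ hc.1 hv.1, ih hc.2 hv.2]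

lemma toReal_map_sum_smul {ι : Type*} (s : Finset ι) (c : ι → ℝ) (v : ι → A)
    (hc : ∀ i ∈ s, 0 ≤ c i) (hv : ∀ i ∈ s, v i ∈ finiteCone τ) :
    (τ (∑ i ∈ s, c i • v i)).toReal = ∑ i ∈ s, c i * (τ (v i)).toReal := by
  rw [hτ.map_sum_smul s c v hc fun i hi => (hv i hi).1,
    ENNReal.toReal_sum fun i hi => ENNReal.mul_ne_top ENNReal.ofReal_ne_top (hv i hi).2.ne]
  refine Finset.sum_congr rfl fun i hi => ?_
  rw [ENNReal.toReal_mul, ENNReal.toReal_ofReal (hc i hi)]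

lemma sum_mul_toReal_eq_zero {ι : Type*} (s : Finset ι) (c : ι → ℝ) (v : ι → A)
    (hv : ∀ i ∈ s, v i ∈ finiteCone τ) (h : ∑ i ∈ s, c i • v i = 0) :
    ∑ i ∈ s, c i * (τ (v i)).toReal = 0 := by
  have hsplit : ∑ i ∈ s, (c i)⁺ • v i = ∑ i ∈ s, (c i)⁻ • v i := by
    rw [← sub_eq_zero, ← Finset.sum_sub_distrib, ← h]
    simp only [← sub_smul, posPart_sub_negPart]
  have := congrArg (fun x => (τ x).toReal) hsplit
  simp only [hτ.toReal_map_sum_smul s _ v (fun i _ => posPart_nonneg _) hv,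
    hτ.toReal_map_sum_smul s _ v (fun i _ => negPart_nonneg _) hv] at this
  calc ∑ i ∈ s, c i * (τ (v i)).toReal
      = ∑ i ∈ s, (c i)⁺ * (τ (v i)).toReal - ∑ i ∈ s, (c i)⁻ * (τ (v i)).toReal := by
        simp only [← Finset.sum_sub_distrib, ← sub_mul, posPart_sub_negPart]
    _ = 0 := sub_eq_zero.mpr this

end IsWeight

end Weight

section CStarAlgebra

variable {A : Type*} [NonUnitalCStarAlgebra A] [PartialOrder A] [StarOrderedRing A]

structure IsTracialWeight (τ : A → ℝ≥0∞) : Prop extends IsWeight τ where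
  star_mul_self_comm : ∀ x : A, τ (star x * x) = τ (x * star x)

def finiteSpan (τ : A → ℝ≥0∞) : Submodule ℂ A := Submodule.span ℂ (finiteCone τ)

namespace IsWeight

variable {τ : A → ℝ≥0∞} (hτ : IsWeight τ)
include hτ

lemma sum_mul_toReal_eq_zero_of_complex {ι : Type*} (s : Finset ι) (c : ι → ℂ) (v : ι → A)
    (hv : ∀ i ∈ s, v i ∈ finiteCone τ) (h : ∑ i ∈ s, c i • v i = 0) :
    ∑ i ∈ s, c i * ((τ (v i)).toReal : ℂ) = 0 := by
  have hsa : ∀ i ∈ s, IsSelfAdjoint (v i) := fun i hi => (hv i hi).1.isSelfAdjoint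
  have hre := hτ.sum_mul_toReal_eq_zero s _ v hv
    (by rw [← realPart_sum_smul s c hsa, h, LinearMap.map_zero, ZeroMemClass.coe_zero])
  have him := hτ.sum_mul_toReal_eq_zero s _ v hv
    (by rw [← imaginaryPart_sum_smul s c hsa, h, LinearMap.map_zero, ZeroMemClass.coe_zero])
  apply Complex.ext <;> simp [Complex.re_sum, Complex.im_sum, hre, him]

theorem exists_linearMap_eq_toReal :
    ∃ σ : A →ₗ[ℂ] ℂ, ∀ x ∈ finiteCone τ, σ x = (τ x).toReal := by
  obtain ⟨σ, hσ⟩ := LinearMap.exists_comp_eq_of_ker_le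
    (Finsupp.linearCombination ℂ ((↑) : finiteCone τ → A))
    (Finsupp.linearCombination ℂ fun x : finiteCone τ => ((τ x).toReal : ℂ)) fun c hc => by
      simp only [LinearMap.mem_ker, Finsupp.linearCombination_apply, Finsupp.sum] at hc ⊢
      exact hτ.sum_mul_toReal_eq_zero_of_complex c.support c _ (fun x _ => x.2) hc
  exact ⟨σ, fun x hx => by simpa using congr($hσ (Finsupp.single ⟨x, hx⟩ 1))⟩

def hilbertSchmidt : Submodule ℂ A where
  carrier := {x | τ (star x * x) < ⊤}
  zero_mem' := by simp [hτ.map_zero]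
  add_mem' {x y} hx hy := by
    have hle : star (x + y) * (x + y) ≤ (star x * x + star y * y) + (star x * x + star y * y) := by
      rw [← sub_nonneg]
      convert star_mul_self_nonneg (x - y) using 1
      simp only [star_add, star_sub]
      noncomm_ring
    have h₀ := add_nonneg (star_mul_self_nonneg x) (star_mul_self_nonneg y)
    refine hτ.lt_top_of_le (star_mul_self_nonneg _) hle ?_
    rw [hτ.map_add _ _ h₀ h₀, hτ.map_add _ _ (star_mul_self_nonneg x) (star_mul_self_nonneg y)]
    exact ENNReal.add_lt_top.mpr ⟨ENNReal.add_lt_top.mpr ⟨hx, hy⟩, ENNReal.add_lt_top.mpr ⟨hx, hy⟩⟩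
  smul_mem' c x hx := by
    have h : star (c • x) * (c • x) = Complex.normSq c • (star x * x) := by
      rw [star_smul, smul_mul_smul_comm, Complex.star_def, ← Complex.normSq_eq_conj_mul_self,
        Complex.coe_smul]
    change τ (star (c • x) * (c • x)) < ⊤
    rw [h, hτ.map_smul _ _ (Complex.normSq_nonneg c) (star_mul_self_nonneg x)]
    exact ENNReal.mul_lt_top ENNReal.ofReal_lt_top hx

lemma mem_hilbertSchmidt {x : A} : x ∈ hτ.hilbertSchmidt ↔ τ (star x * x) < ⊤ := Iff.rfl

lemma mul_mem_hilbertSchmidt_left (z : A) {x : A} (hx : x ∈ hτ.hilbertSchmidt) :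
    z * x ∈ hτ.hilbertSchmidt := by
  have hle : star (z * x) * (z * x) ≤ ‖star z * z‖ • (star x * x) := by
    rw [star_mul, show star x * star z * (z * x) = star x * (star z * z) * x by noncomm_ring]
    exact CStarAlgebra.star_left_conjugate_le_norm_smul
  refine hτ.lt_top_of_le (star_mul_self_nonneg _) hle ?_
  rw [hτ.map_smul _ _ (norm_nonneg _) (star_mul_self_nonneg x)]
  exact ENNReal.mul_lt_top ENNReal.ofReal_lt_top hx

lemma exists_mem_hilbertSchmidt_mul_self_eq {s : A} (hs : s ∈ finiteCone τ) :
    ∃ r ∈ hτ.hilbertSchmidt, star r = r ∧ r * r = s := by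
  have hr : star (CFC.sqrt s) = CFC.sqrt s := (CFC.sqrt_nonneg s).isSelfAdjoint.star_eq
  have hrr : CFC.sqrt s * CFC.sqrt s = s := CFC.sqrt_mul_sqrt_self s hs.1
  exact ⟨CFC.sqrt s, by rw [mem_hilbertSchmidt, hr, hrr]; exact hs.2, hr, hrr⟩

lemma star_mul_mem_finiteSpan {x y : A} (hx : x ∈ hτ.hilbertSchmidt)
    (hy : y ∈ hτ.hilbertSchmidt) : star x * y ∈ finiteSpan τ := by
  rw [star_mul_eq_polarization]
  refine Submodule.smul_mem _ _ (Submodule.sum_mem _ fun k _ => Submodule.smul_mem _ _ ?_)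
  exact Submodule.subset_span ⟨star_mul_self_nonneg _, add_mem (Submodule.smul_mem _ _ hx) hy⟩

end IsWeight

namespace IsTracialWeight

variable {τ : A → ℝ≥0∞} (hτ : IsTracialWeight τ)
include hτ

lemma star_mem_hilbertSchmidt {x : A} (hx : x ∈ hτ.hilbertSchmidt) :
    star x ∈ hτ.hilbertSchmidt := by
  rw [IsWeight.mem_hilbertSchmidt, star_star, ← hτ.star_mul_self_comm]
  exact hx

lemma mul_mem_hilbertSchmidt_right {x : A} (hx : x ∈ hτ.hilbertSchmidt) (z : A) :
    x * z ∈ hτ.hilbertSchmidt := by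
  simpa using hτ.star_mem_hilbertSchmidt
    (hτ.mul_mem_hilbertSchmidt_left (star z) (hτ.star_mem_hilbertSchmidt hx))

lemma mul_mem_finiteSpan_left (z : A) {m : A} (hm : m ∈ finiteSpan τ) :
    z * m ∈ finiteSpan τ := by
  induction hm using Submodule.span_induction with
  | mem s hs =>
    obtain ⟨r, hr, hrs, rfl⟩ := hτ.exists_mem_hilbertSchmidt_mul_self_eq hs
    rw [show z * (r * r) = star (r * star z) * r by rw [star_mul, star_star, hrs, mul_assoc]]
    exact hτ.star_mul_mem_finiteSpan (hτ.mul_mem_hilbertSchmidt_right hr _) hr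
  | zero => simp
  | add x y _ _ hx hy => rw [mul_add]; exact add_mem hx hy
  | smul c x _ hx => rw [mul_smul_comm]; exact Submodule.smul_mem _ c hx

lemma mul_mem_finiteSpan_right {m : A} (hm : m ∈ finiteSpan τ) (z : A) :
    m * z ∈ finiteSpan τ := by
  induction hm using Submodule.span_induction with
  | mem s hs =>
    obtain ⟨r, hr, hrs, rfl⟩ := hτ.exists_mem_hilbertSchmidt_mul_self_eq hs
    rw [show r * r * z = star r * (r * z) by rw [hrs, mul_assoc]]
    exact hτ.star_mul_mem_finiteSpan hr (hτ.mul_mem_hilbertSchmidt_right hr _)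
  | zero => simp
  | add x y _ _ hx hy => rw [add_mul]; exact add_mem hx hy
  | smul c x _ hx => rw [smul_mul_assoc]; exact Submodule.smul_mem _ c hx

lemma finiteSpan_le_hilbertSchmidt : finiteSpan τ ≤ hτ.hilbertSchmidt :=
  Submodule.span_le.mpr fun s hs => by
    obtain ⟨r, hr, -, rfl⟩ := hτ.exists_mem_hilbertSchmidt_mul_self_eq hs
    exact hτ.mul_mem_hilbertSchmidt_left r hr

section Trace

variable {σ : A →ₗ[ℂ] ℂ} (hσ : ∀ x ∈ finiteCone τ, σ x = (τ x).toReal)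
include hσ

lemma apply_star_mul_comm {x y : A} (hx : x ∈ hτ.hilbertSchmidt) (hy : y ∈ hτ.hilbertSchmidt) :
    σ (star x * y) = σ (y * star x) := by
  have key : ∀ w ∈ hτ.hilbertSchmidt, σ (star w * w) = σ (w * star w) := fun w hw => by
    have hw' : τ (w * star w) < ⊤ := hτ.star_mul_self_comm w ▸ hw
    rw [hσ _ ⟨star_mul_self_nonneg w, hw⟩, hσ _ ⟨mul_star_self_nonneg w, hw'⟩,
      hτ.star_mul_self_comm]
  rw [star_mul_eq_polarization, mul_star_eq_polarization]
  simp only [map_smul, map_sum]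
  congr 1
  refine Finset.sum_congr rfl fun k _ => ?_
  rw [key _ (add_mem (Submodule.smul_mem _ _ hx) hy)]

lemma apply_mul_comm {m : A} (hm : m ∈ finiteSpan τ) (z : A) : σ (m * z) = σ (z * m) := by
  induction hm using Submodule.span_induction with
  | mem s hs =>
    obtain ⟨r, hr, hrs, rfl⟩ := hτ.exists_mem_hilbertSchmidt_mul_self_eq hs
    have hrz : r * star z ∈ hτ.hilbertSchmidt := hτ.mul_mem_hilbertSchmidt_right hr _
    calc σ (r * r * z) = σ (star r * (r * z)) := by rw [hrs, mul_assoc]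
      _ = σ (r * z * star r) :=
        hτ.apply_star_mul_comm hσ hr (hτ.mul_mem_hilbertSchmidt_right hr z)
      _ = σ (r * star (r * star z)) := by rw [star_mul, star_star, hrs, mul_assoc]
      _ = σ (star (r * star z) * r) := (hτ.apply_star_mul_comm hσ hrz hr).symm
      _ = σ (z * (r * r)) := by rw [star_mul, star_star, hrs, mul_assoc]
  | zero => simp
  | add x y _ _ hx hy => simp only [add_mul, mul_add, map_add, hx, hy]
  | smul c x _ hx => simp only [smul_mul_assoc, mul_smul_comm, map_smul, hx]

lemma eq_zero_of_isIdempotentElem (hfaithful : ∀ x : A, 0 ≤ x → τ x = 0 → x = 0) {e : A}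
    (he : IsIdempotentElem e) (he_mem : e ∈ finiteSpan τ) (hσe : σ e = 0) : e = 0 := by
  obtain ⟨p, hp, hep, hpe⟩ := he.exists_isStarProjection
  have hp_mem : p ∈ finiteSpan τ := hep ▸ hτ.mul_mem_finiteSpan_right he_mem p
  have hp_fin : τ p < ⊤ := by
    have := hτ.finiteSpan_le_hilbertSchmidt hp_mem
    rwa [IsWeight.mem_hilbertSchmidt, hp.isSelfAdjoint.star_eq, hp.isIdempotentElem.eq] at this
  have hτp : ((τ p).toReal : ℂ) = 0 := calc
    ((τ p).toReal : ℂ) = σ (e * p) := by rw [hep, hσ p ⟨hp.nonneg, hp_fin⟩]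
    _ = σ (p * e) := hτ.apply_mul_comm hσ he_mem p
    _ = 0 := by rw [hpe, hσe]
  have hp_zero : p = 0 := hfaithful p hp.nonneg <|
    (ENNReal.toReal_eq_zero_iff _).mp (mod_cast hτp) |>.resolve_right hp_fin.ne
  rw [← hpe, hp_zero, zero_mul]

end Trace

theorem add_sub_mul_eq_zero_comm
    (hfaithful : ∀ x : A, 0 ≤ x → τ x = 0 → x = 0) {a b : A} (hb : b ∈ finiteSpan τ)
    (h : a + b - a * b = 0) : b + a - b * a = 0 := by
  obtain ⟨σ, hσ⟩ := hτ.exists_linearMap_eq_toReal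
  have hq : b + a - b * a = a * b - b * a := by rw [← sub_eq_zero, ← h]; abel
  have hq_idem : IsIdempotentElem (b + a - b * a) := by
    -- In the unitization `b + a - b * a = 1 - (1 - b) * (1 - a)`, while `(1 - a) * (1 - b) = 1`.
    have : (b + a - b * a) * (b + a - b * a) = (b + a - b * a)
        - ((a + b - a * b) - b * (a + b - a * b) - (a + b - a * b) * a
          + b * (a + b - a * b) * a) := by noncomm_ring
    rw [IsIdempotentElem, this, h]
    simp
  refine hτ.eq_zero_of_isIdempotentElem hσ hfaithful hq_idem ?_ ?_
  · rw [hq]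
    exact sub_mem (hτ.mul_mem_finiteSpan_left a hb) (hτ.mul_mem_finiteSpan_right hb a)
  · rw [hq, map_sub, hτ.apply_mul_comm hσ hb, sub_self]

theorem one_sub_inr_mul_eq_one
    (hfaithful : ∀ x : A, 0 ≤ x → τ x = 0 → x = 0) {b : A} (hb : b ∈ finiteSpan τ) {x : A⁺¹}
    (h : x * (1 - b) = 1) : (1 - (b : A⁺¹)) * x = 1 := by
  have hx : x = 1 - ((-x.snd : A) : A⁺¹) := by
    have hfst : x.fst = 1 := by simpa [sub_eq_add_neg] using congrArg (·.fst) h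
    ext <;> simp [sub_eq_add_neg, hfst]
  rw [hx, Unitization.one_sub_inr_mul_one_sub_inr_eq_one_iff] at h ⊢
  exact hτ.add_sub_mul_eq_zero_comm hfaithful hb h

end IsTracialWeight

end CStarAlgebra

/-- Let `A` be a C*-algebra and `τ` a faithful tracial weight on the
positive cone `A₊` (with values in `[0,∞]`).  Let `B` be the norm closure of the linear
span of `{x ∈ A₊ : τ(x) < ∞}`.  Then `B` is directly finite. -/
theorem directlyFinite_of_faithful_tracial_weight
    {A : Type*} [NonUnitalNormedRing A] [StarRing A] [CStarRing A]
    [NormedSpace ℂ A] [IsScalarTower ℂ A A] [SMulCommClass ℂ A A] [StarModule ℂ A]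
    [CompleteSpace A] [PartialOrder A] [StarOrderedRing A]
    (τ : A → ℝ≥0∞)
    (hadd : ∀ x y : A, 0 ≤ x → 0 ≤ y → τ (x + y) = τ x + τ y)
    (hhomog : ∀ (t : ℝ) (x : A), 0 ≤ t → 0 ≤ x → τ (t • x) = ENNReal.ofReal t * τ x)
    (hfaithful : ∀ x : A, 0 ≤ x → τ x = 0 → x = 0)
    (htracial : ∀ x : A, τ (star x * x) = τ (x * star x)) :
    ∀ a b : A,
      a ∈ closure (Submodule.span ℂ {x : A | 0 ≤ x ∧ τ x < ⊤} : Set A) →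
      b ∈ closure (Submodule.span ℂ {x : A | 0 ≤ x ∧ τ x < ⊤} : Set A) →
      a + b - a * b = 0 → b + a - b * a = 0 := by
  intro a b _ hb hab
  let _ : NonUnitalCStarAlgebra A := {}
  have hτ : IsTracialWeight τ := ⟨⟨hadd, hhomog⟩, htracial⟩
  obtain ⟨m, hm, hbm⟩ : ∃ m ∈ finiteSpan τ, ‖b - m‖ < 1 := by
    obtain ⟨m, hm, hbm⟩ := Metric.mem_closure_iff.mp hb 1 one_pos
    exact ⟨m, hm, by rwa [← dist_eq_norm]⟩
  let g : A⁺¹ˣ := Units.oneSub ((b - m : A) : A⁺¹) (by rwa [Unitization.norm_inr])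
  rw [← Unitization.one_sub_inr_mul_one_sub_inr_eq_one_iff (R := ℂ)] at hab ⊢
  refine mul_eq_one_comm_of_inv_mul_mem_s8 (N := {y | ∃ b ∈ finiteSpan τ, y = 1 - (b : A⁺¹)})
    (fun x y ⟨b, hb, hy⟩ h => hy ▸ hτ.one_sub_inr_mul_eq_one hfaithful hb (hy ▸ h)) g ?_ hab
  refine ⟨(↑g⁻¹ : A⁺¹).fst • m + (↑g⁻¹ : A⁺¹).snd * m,
    add_mem (Submodule.smul_mem _ _ hm) (hτ.mul_mem_finiteSpan_left _ hm), ?_⟩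
  have hbg : 1 - (b : A⁺¹) = g - m := by simp [g, Unitization.inr_sub]; abel
  rw [← Unitization.mul_inr, hbg, mul_sub, Units.inv_mul]
end

section
/- Let A be a unital C*-algebra and let p ∈ A be an idempotent (p² = p). Then the element 1 + (p − p*)(p* − p) is invertible in A, and e := p p* (1 + (p − p*)(p* − p))⁻¹ is a hermitian idempotent (e* = e, e² = e) satisfying ep = p and pe = e. -/
/-!
Write `q = p*` and `a = 1 + (p - q)(q - p)`. Since `q - p = (p - q)*`, `a = 1 + x x*` with
`x = p - q`, so `a ≥ 1` and `a` is invertible. Because `p` and `q` are idempotents, a direct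
expansion gives `a p = p q p = p a` and `a q = q p q = q a`; thus `a⁻¹` is self-adjoint and commutes
with `p` and `p*`. Then `e = p p* a⁻¹` is self-adjoint, `e p = p p* p a⁻¹ = p a a⁻¹ = p`, and
`e² = (e p) p* a⁻¹ = e`, `p e = p² p* a⁻¹ = e`.
-/

theorem Commute.ringInverse_left {M₀ : Type*} [MonoidWithZero M₀] {a b : M₀}
    (h : Commute a b) : Commute (Ring.inverse a) b := by
  by_cases ha : IsUnit a
  · obtain ⟨u, rfl⟩ := ha
    rw [Ring.inverse_unit]
    exact h.units_inv_left
  · rw [Ring.inverse_non_unit a ha]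
    exact Commute.zero_left b

section Ring

variable {R : Type*} [Ring R] {p q : R}

theorem sub_mul_sub_comm (p q : R) : (p - q) * (q - p) = (q - p) * (p - q) := by
  noncomm_ring

theorem IsIdempotentElem.one_add_sub_mul_sub_mul (hp : IsIdempotentElem p)
    (hq : IsIdempotentElem q) : (1 + (p - q) * (q - p)) * p = p * q * p := by
  have expand : (1 + (p - q) * (q - p)) * p = p + p * q * p - p * p * p - q * q * p
      + q * (p * p) := by noncomm_ring
  simp only [expand, hp.eq, hq.eq]
  abel

theorem IsIdempotentElem.mul_one_add_sub_mul_sub (hp : IsIdempotentElem p)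
    (hq : IsIdempotentElem q) : p * (1 + (p - q) * (q - p)) = p * q * p := by
  have expand : p * (1 + (p - q) * (q - p)) = p + p * p * q - p * p * p - p * (q * q)
      + p * q * p := by noncomm_ring
  simp only [expand, hp.eq, hq.eq]
  abel

theorem IsIdempotentElem.commute_one_add_sub_mul_sub_left (hp : IsIdempotentElem p)
    (hq : IsIdempotentElem q) : Commute (1 + (p - q) * (q - p)) p :=
  (hp.one_add_sub_mul_sub_mul hq).trans (hp.mul_one_add_sub_mul_sub hq).symm

theorem IsIdempotentElem.commute_one_add_sub_mul_sub_right (hp : IsIdempotentElem p)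
    (hq : IsIdempotentElem q) : Commute (1 + (p - q) * (q - p)) q := by
  rw [sub_mul_sub_comm]
  exact hq.commute_one_add_sub_mul_sub_left hp

end Ring

section StarRing

variable {R : Type*} [Ring R] [StarRing R] {p : R}

theorem isSelfAdjoint_one_add_sub_star_mul_star_sub (p : R) :
    IsSelfAdjoint (1 + (p - star p) * (star p - p)) := by
  simp [isSelfAdjoint_iff, star_sub, star_mul]

theorem hermitian_idempotent_of_isUnit (hp : IsIdempotentElem p)
    (ha : IsUnit (1 + (p - star p) * (star p - p))) {e : R}
    (he : e = p * star p * Ring.inverse (1 + (p - star p) * (star p - p))) :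
    star e = e ∧ e * e = e ∧ e * p = p ∧ p * e = e := by
  set a := 1 + (p - star p) * (star p - p)
  have hinv_star : star (Ring.inverse a) = Ring.inverse a :=
    (isSelfAdjoint_one_add_sub_star_mul_star_sub p).ringInverse.star_eq
  have hinv_p : Commute (Ring.inverse a) p :=
    (hp.commute_one_add_sub_mul_sub_left hp.star).ringInverse_left
  have hinv_q : Commute (Ring.inverse a) (star p) :=
    (hp.commute_one_add_sub_mul_sub_right hp.star).ringInverse_left
  have hep : e * p = p := by
    calc e * p = p * star p * p * Ring.inverse a := by
          rw [he, mul_assoc _ _ p, hinv_p.eq, ← mul_assoc]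
    _ = p * (a * Ring.inverse a) := by rw [← hp.mul_one_add_sub_mul_sub hp.star, mul_assoc]
    _ = p := by rw [Ring.mul_inverse_cancel a ha, mul_one]
  refine ⟨?_, ?_, hep, ?_⟩
  · rw [he, star_mul, star_mul, star_star, hinv_star, ← mul_assoc, hinv_p.eq, mul_assoc p,
      hinv_q.eq, mul_assoc]
  · calc e * e = e * p * (star p * Ring.inverse a) := by rw [mul_assoc e p, ← mul_assoc p, ← he]
    _ = e := by rw [hep, he, mul_assoc p]
  · rw [he, ← mul_assoc, ← mul_assoc, hp.eq]

end StarRing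

theorem isUnit_one_add_mul_star_self {A : Type*} [CStarAlgebra A] [PartialOrder A]
    [StarOrderedRing A] (x : A) : IsUnit (1 + x * star x) :=
  CStarAlgebra.isUnit_of_le 1 (le_add_of_nonneg_right (mul_star_self_nonneg x))

/-- In a unital C*-algebra, for an idempotent `p` the element
`1 + (p - p*)(p* - p)` is invertible, and `e := p p* (1 + (p - p*)(p* - p))⁻¹` is a
hermitian idempotent with `e p = p` and `p e = e`. -/
theorem hermitian_idempotent_formula
    {A : Type*} [NormedRing A] [StarRing A] [CStarRing A]
    [NormedAlgebra ℂ A] [StarModule ℂ A] [CompleteSpace A]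
    (p : A) (hp : p * p = p) :
    IsUnit (1 + (p - star p) * (star p - p)) ∧
    ∀ e : A, e = p * star p * Ring.inverse (1 + (p - star p) * (star p - p)) →
      star e = e ∧ e * e = e ∧ e * p = p ∧ p * e = e := by
  let _ : CStarAlgebra A := {}
  let _ := CStarAlgebra.spectralOrder A
  have := CStarAlgebra.spectralOrderedRing A
  have ha : IsUnit (1 + (p - star p) * (star p - p)) := by
    simpa only [star_sub, star_star] using isUnit_one_add_mul_star_self (p - star p)
  exact ⟨ha, fun e he => hermitian_idempotent_of_isUnit hp ha he⟩
end

section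
/- Let G be a locally compact group with left Haar measure μ and 1 < p < ∞. If S ∈ PF_p(G) and (g, T) ∈ X_p(G), then (S(g), S∘T) ∈ X_p(G). Consequently the bilinear map ((f,S),(g,T)) ↦ (S(g), S∘T) makes X_p(G) a Banach algebra, and the coordinate projection π_P : X_p(G) → PF_p(G), (g,T) ↦ T, is an algebra homomorphism with dense range. -/
open MeasureTheory ENNReal
open scoped ENNReal

/-- Convolution of two (complex-valued) functions on a locally compact group. -/
noncomputable def conv {G : Type*} [Group G] [MeasurableSpace G] (μ : Measure G)
    (f h : G → ℂ) : G → ℂ :=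
  fun x => ∫ y, f y * h (y⁻¹ * x) ∂μ

/-- `T` is the convolution operator `λ_p(f)` on `L^p(G,μ)`. -/
def IsConvOp {G : Type*} [Group G] [TopologicalSpace G] [MeasurableSpace G]
    (μ : Measure G) (p : ℝ≥0∞) [Fact (1 ≤ p)]
    (f : G → ℂ) (T : Lp ℂ p μ →L[ℂ] Lp ℂ p μ) : Prop :=
  ∀ (h : G → ℂ), Continuous h → HasCompactSupport h → ∀ (hm : MemLp h p μ),
    ⇑(T (hm.toLp h)) =ᵐ[μ] conv μ f h

/-- The algebra of `p`-pseudofunctions `PF_p(G)`. -/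
def PF {G : Type*} [Group G] [TopologicalSpace G] [MeasurableSpace G]
    (μ : Measure G) (p : ℝ≥0∞) [Fact (1 ≤ p)] :
    Set (Lp ℂ p μ →L[ℂ] Lp ℂ p μ) :=
  closure {T | ∃ f : G → ℂ, Continuous f ∧ HasCompactSupport f ∧ IsConvOp μ p f T}

/-- `X_p(G)`: the norm closure, in `L^p(G,μ) ⊕ B(L^p(G,μ))`, of the set of pairs
`(f, λ_p(f))` for `f ∈ C_c(G)`. -/
def Xp {G : Type*} [Group G] [TopologicalSpace G] [MeasurableSpace G]
    (μ : Measure G) (p : ℝ≥0∞) [Fact (1 ≤ p)] :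
    Set (Lp ℂ p μ × (Lp ℂ p μ →L[ℂ] Lp ℂ p μ)) :=
  closure {x | ∃ f : G → ℂ, Continuous f ∧ HasCompactSupport f ∧
    ⇑x.1 =ᵐ[μ] f ∧ IsConvOp μ p f x.2}

open Function
open scoped Pointwise

/-!
On the dense pairs `(f, λ_p(f))` with `f ∈ C_c(G)`, the operator `λ_p(f')` sends `(f, λ_p(f))` to
`(f' * f, λ_p(f') ∘ λ_p(f)) = (f' * f, λ_p(f' * f))`: convolution preserves `C_c(G)` and is
associative, by Fubini for compactly supported continuous functions and left invariance of `μ`.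
Since `(S, (g, T)) ↦ (S g, S ∘ T)` is jointly continuous, it maps `PF_p(G) × X_p(G)` into
`X_p(G)`. Associativity and submultiplicativity hold for all pairs of operators, and the
projection onto the second coordinate maps the generators of `X_p(G)` onto those of `PF_p(G)`.
-/

/-- The operators `λ_p(f)`, `f ∈ C_c(G)`, whose closure is `PF_p(G)`. -/
def convOps {G : Type*} [Group G] [TopologicalSpace G] [MeasurableSpace G]
    (μ : Measure G) (p : ℝ≥0∞) [Fact (1 ≤ p)] : Set (Lp ℂ p μ →L[ℂ] Lp ℂ p μ) :=
  {T | ∃ f : G → ℂ, Continuous f ∧ HasCompactSupport f ∧ IsConvOp μ p f T}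

/-- The pairs `(f, λ_p(f))`, `f ∈ C_c(G)`, whose closure is `X_p(G)`. -/
def convPairs {G : Type*} [Group G] [TopologicalSpace G] [MeasurableSpace G]
    (μ : Measure G) (p : ℝ≥0∞) [Fact (1 ≤ p)] :
    Set (Lp ℂ p μ × (Lp ℂ p μ →L[ℂ] Lp ℂ p μ)) :=
  {x | ∃ f : G → ℂ, Continuous f ∧ HasCompactSupport f ∧ ⇑x.1 =ᵐ[μ] f ∧ IsConvOp μ p f x.2}

section OperatorPairs

variable {𝕜 E : Type*} [NontriviallyNormedField 𝕜] [NormedAddCommGroup E] [NormedSpace 𝕜 E]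

theorem apply_fst_mul_snd_mem_closure {s : Set (E →L[𝕜] E)} {t : Set (E × (E →L[𝕜] E))}
    (hst : ∀ S ∈ s, ∀ x ∈ t, (S x.1, S * x.2) ∈ t) {S : E →L[𝕜] E} (hS : S ∈ closure s)
    {x : E × (E →L[𝕜] E)} (hx : x ∈ closure t) : (S x.1, S * x.2) ∈ closure t := by
  have hSx : (S, x) ∈ closure (s ×ˢ t) := by
    rw [closure_prod_eq]
    exact ⟨hS, hx⟩
  let act : (E →L[𝕜] E) × (E × (E →L[𝕜] E)) → E × (E →L[𝕜] E) :=
    fun q => (q.1 q.2.1, q.1 * q.2.2)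
  have hact : Continuous act :=
    (continuous_fst.clm_apply (continuous_fst.comp continuous_snd)).prodMk
      (continuous_fst.mul (continuous_snd.comp continuous_snd))
  exact map_mem_closure (f := act) hact hSx fun q hq => hst q.1 hq.1 q.2 hq.2

theorem norm_apply_fst_mul_snd_le (x y : E × (E →L[𝕜] E)) :
    ‖(x.2 y.1, x.2 * y.2)‖ ≤ ‖x‖ * ‖y‖ := by
  rw [Prod.norm_def]
  refine max_le ?_ ?_
  · exact (x.2.le_opNorm y.1).trans
      (mul_le_mul (norm_snd_le x) (norm_fst_le y) (norm_nonneg _) (norm_nonneg _))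
  · exact (norm_mul_le _ _).trans
      (mul_le_mul (norm_snd_le x) (norm_snd_le y) (norm_nonneg _) (norm_nonneg _))

end OperatorPairs

section Convolution

variable {G : Type*} [Group G] [MeasurableSpace G] (μ : Measure G) {f g h : G → ℂ}

theorem support_conv_subset (f g : G → ℂ) :
    support (conv μ f g) ⊆ support f * support g := by
  intro x hx
  by_contra hmem
  have hzero : ∀ y, f y * g (y⁻¹ * x) = 0 := fun y => by
    by_contra hy
    obtain ⟨hfy, hgy⟩ := mul_ne_zero_iff.mp hy
    exact hmem ⟨y, hfy, y⁻¹ * x, hgy, mul_inv_cancel_left y x⟩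
  exact hx (by simp only [conv, hzero, integral_zero])

variable [TopologicalSpace G] [IsTopologicalGroup G]

theorem HasCompactSupport.conv (hf : HasCompactSupport f) (hg : HasCompactSupport g) :
    HasCompactSupport (conv μ f g) :=
  .of_support_subset_isCompact (IsCompact.mul hf hg)
    ((support_conv_subset μ f g).trans
      (Set.mul_subset_mul (subset_tsupport f) (subset_tsupport g)))

variable [OpensMeasurableSpace G] [IsFiniteMeasureOnCompacts μ]

theorem continuous_conv (hf : Continuous f) (hfc : HasCompactSupport f) (hg : Continuous g) :
    Continuous (conv μ f g) := by
  rw [← continuousOn_univ]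
  refine continuousOn_integral_of_compact_support hfc ?_
    fun _ y _ hy => by rw [image_eq_zero_of_notMem_tsupport hy, zero_mul]
  exact ((hf.comp continuous_snd).mul
    (hg.comp (continuous_snd.inv.mul continuous_fst))).continuousOn

variable [MeasurableMul G] [μ.IsMulLeftInvariant]

theorem conv_assoc (hf : Continuous f) (hfc : HasCompactSupport f)
    (hg : Continuous g) (hgc : HasCompactSupport g) (hh : Continuous h) :
    conv μ (conv μ f g) h = conv μ f (conv μ g h) := by
  funext x
  set F : G → G → ℂ := fun y z => f z * g (z⁻¹ * y) * h (y⁻¹ * x) with hF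
  have hFcont : Continuous (uncurry F) :=
    ((hf.comp continuous_snd).mul (hg.comp (continuous_snd.inv.mul continuous_fst))).mul
      (hh.comp (continuous_fst.inv.mul continuous_const))
  have hFsupp : support (uncurry F) ⊆ (tsupport f * tsupport g) ×ˢ tsupport f := by
    rintro ⟨y, z⟩ hyz
    have hfz : f z ≠ 0 := fun h0 => hyz (by simp [hF, h0])
    have hgz : g (z⁻¹ * y) ≠ 0 := fun h0 => hyz (by simp [hF, h0])
    exact ⟨⟨z, subset_tsupport f hfz, z⁻¹ * y, subset_tsupport g hgz, mul_inv_cancel_left z y⟩,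
      subset_tsupport f hfz⟩
  have hFc : HasCompactSupport (uncurry F) :=
    .of_support_subset_isCompact ((IsCompact.mul hfc hgc).prod hfc) hFsupp
  have inner (z : G) : ∫ y, F y z ∂μ = f z * conv μ g h (z⁻¹ * x) := by
    have hinv := integral_mul_left_eq_self (μ := μ) (fun y => g (z⁻¹ * y) * h (y⁻¹ * x)) z
    simp only [inv_mul_cancel_left, mul_inv_rev, mul_assoc] at hinv
    simp only [hF, mul_assoc, integral_const_mul, conv, ← hinv]
  calc conv μ (conv μ f g) h x = ∫ y, ∫ z, F y z ∂μ ∂μ := by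
        simp only [hF, conv, ← integral_mul_const]
    _ = ∫ z, ∫ y, F y z ∂μ ∂μ := integral_integral_swap_of_hasCompactSupport hFcont hFc
    _ = conv μ f (conv μ g h) x := by simp only [inner, conv]

theorem IsConvOp.mul {p : ℝ≥0∞} [Fact (1 ≤ p)] {S T : Lp ℂ p μ →L[ℂ] Lp ℂ p μ}
    (hf : Continuous f) (hfc : HasCompactSupport f)
    (hg : Continuous g) (hgc : HasCompactSupport g)
    (hS : IsConvOp μ p f S) (hT : IsConvOp μ p g T) :
    IsConvOp μ p (conv μ f g) (S * T) := by
  intro h hh hhc hm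
  have hk : Continuous (conv μ g h) := continuous_conv μ hg hgc hh
  have hkc : HasCompactSupport (conv μ g h) := hgc.conv μ hhc
  have hkm : MemLp (conv μ g h) p μ := hk.memLp_of_hasCompactSupport hkc
  have hTh : T (hm.toLp h) = hkm.toLp (conv μ g h) :=
    Lp.ext ((hT h hh hhc hm).trans hkm.coeFn_toLp.symm)
  rw [mul_apply_eq_comp, hTh, conv_assoc μ hf hfc hg hgc hh]
  exact hS _ hk hkc hkm

end Convolution

section PseudoFunctions

variable {G : Type*} [Group G] [TopologicalSpace G] [MeasurableSpace G]
  {μ : Measure G} {p : ℝ≥0∞} [Fact (1 ≤ p)]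

theorem snd_mem_PF_of_mem_Xp {x} (hx : x ∈ Xp μ p) : x.2 ∈ PF μ p :=
  map_mem_closure continuous_snd hx fun _ ⟨f, hf, hfc, _, hT⟩ => ⟨f, hf, hfc, hT⟩

variable [OpensMeasurableSpace G] [IsFiniteMeasureOnCompacts μ]

theorem PF_subset_closure_image_snd_Xp : PF μ p ⊆ closure (Prod.snd '' Xp μ p) := by
  refine closure_mono ?_
  rintro T ⟨f, hf, hfc, hT⟩
  have hfm : MemLp f p μ := hf.memLp_of_hasCompactSupport hfc
  exact ⟨(hfm.toLp f, T), subset_closure ⟨f, hf, hfc, hfm.coeFn_toLp, hT⟩, rfl⟩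

variable [IsTopologicalGroup G] [MeasurableMul G] [μ.IsMulLeftInvariant]

theorem apply_fst_mul_snd_mem_convPairs {S : Lp ℂ p μ →L[ℂ] Lp ℂ p μ} (hS : S ∈ convOps μ p)
    {x} (hx : x ∈ convPairs μ p) : (S x.1, S * x.2) ∈ convPairs μ p := by
  obtain ⟨f, hf, hfc, hSf⟩ := hS
  obtain ⟨g, hg, hgc, hxg, hTg⟩ := hx
  have hgm : MemLp g p μ := hg.memLp_of_hasCompactSupport hgc
  have hx1 : x.1 = hgm.toLp g := Lp.ext (hxg.trans hgm.coeFn_toLp.symm)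
  refine ⟨conv μ f g, continuous_conv μ hf hfc hg, hfc.conv μ hgc, ?_,
    hSf.mul μ hf hfc hg hgc hTg⟩
  rw [hx1]
  exact hSf g hg hgc hgm

theorem apply_fst_mul_snd_mem_Xp {S : Lp ℂ p μ →L[ℂ] Lp ℂ p μ} (hS : S ∈ PF μ p)
    {x} (hx : x ∈ Xp μ p) : (S x.1, S * x.2) ∈ Xp μ p :=
  apply_fst_mul_snd_mem_closure (fun _ hS _ hx => apply_fst_mul_snd_mem_convPairs hS hx) hS hx

end PseudoFunctions

theorem Xp_banach_algebra_general
    {G : Type*} [Group G] [TopologicalSpace G] [IsTopologicalGroup G]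
    [MeasurableSpace G] [BorelSpace G]
    (μ : Measure G) [μ.IsHaarMeasure]
    (p : ℝ≥0∞) [Fact (1 ≤ p)] :
    (∀ S ∈ PF μ p, ∀ x ∈ Xp μ p, (S x.1, S * x.2) ∈ Xp μ p) ∧
    (∀ x ∈ Xp μ p, ∀ y ∈ Xp μ p, (x.2 y.1, x.2 * y.2) ∈ Xp μ p) ∧
    (∀ x ∈ Xp μ p, ∀ y ∈ Xp μ p, ∀ z ∈ Xp μ p,
      ((x.2 * y.2) z.1, (x.2 * y.2) * z.2) = (x.2 ((y.2 z.1, y.2 * z.2).1),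
        x.2 * (y.2 * z.2))) ∧
    (∀ x ∈ Xp μ p, ∀ y ∈ Xp μ p,
      ‖(x.2 y.1, x.2 * y.2)‖ ≤ ‖x‖ * ‖y‖) ∧
    (∀ x ∈ Xp μ p, x.2 ∈ PF μ p) ∧
    (∀ S ∈ PF μ p, S ∈ closure (Prod.snd '' Xp μ p)) :=
  ⟨fun _ hS _ hx => apply_fst_mul_snd_mem_Xp hS hx,
    fun _ hx _ hy => apply_fst_mul_snd_mem_Xp (snd_mem_PF_of_mem_Xp hx) hy,
    fun _ _ _ _ _ _ => Prod.ext rfl (mul_assoc _ _ _),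
    fun x _ y _ => norm_apply_fst_mul_snd_le x y,
    fun _ hx => snd_mem_PF_of_mem_Xp hx, fun _ hS => PF_subset_closure_image_snd_Xp hS⟩

/-- `X_p(G)` is a left ideal-like Banach algebra over `PF_p(G)`:
if `S ∈ PF_p(G)` and `(g,T) ∈ X_p(G)`, then `(S(g), S∘T) ∈ X_p(G)`; the multiplication
`((f,S),(g,T)) ↦ (S(g), S∘T)` makes `X_p(G)` a Banach algebra (it is internal,
associative and submultiplicative), and the coordinate projection `π_P` onto
`PF_p(G)` is an algebra homomorphism with dense range. -/
theorem Xp_banach_algebra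
    {G : Type*} [Group G] [TopologicalSpace G] [IsTopologicalGroup G]
    [LocallyCompactSpace G] [MeasurableSpace G] [BorelSpace G]
    (μ : Measure G) [μ.IsHaarMeasure]
    (p : ℝ≥0∞) [Fact (1 ≤ p)] (hp1 : 1 < p) (hp2 : p ≠ ⊤) :
    (∀ S ∈ PF μ p, ∀ x ∈ Xp μ p, (S x.1, S * x.2) ∈ Xp μ p) ∧
    (∀ x ∈ Xp μ p, ∀ y ∈ Xp μ p, (x.2 y.1, x.2 * y.2) ∈ Xp μ p) ∧
    (∀ x ∈ Xp μ p, ∀ y ∈ Xp μ p, ∀ z ∈ Xp μ p,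
      ((x.2 * y.2) z.1, (x.2 * y.2) * z.2) = (x.2 ((y.2 z.1, y.2 * z.2).1),
        x.2 * (y.2 * z.2))) ∧
    (∀ x ∈ Xp μ p, ∀ y ∈ Xp μ p,
      ‖(x.2 y.1, x.2 * y.2)‖ ≤ ‖x‖ * ‖y‖) ∧
    (∀ x ∈ Xp μ p, x.2 ∈ PF μ p) ∧
    (∀ S ∈ PF μ p, S ∈ closure (Prod.snd '' Xp μ p)) :=
  Xp_banach_algebra_general μ p
end
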